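/- Let α > −1/4, β = √(1+4α), φ₀(R) = β·R^{(β+1)/2}(1−R^{2β})/(1+R^{2β})^{3/2}, and U(R) = 10·W_α(R)⁴ + 20·R·W_α(R)³·W_α'(R). Then the function R ↦ U(R)·φ₀(R)² is integrable on (0,∞) and ∫₀^∞ U(R)·φ₀(R)² dR = 0. -/

import Mathlib

open MeasureTheory

noncomputable def betaOf (α : ℝ) : ℝ := Real.sqrt (1 + 4 * α)

/-- The ground state soliton `W_α(R) = (3β²)^(1/4) (R^(β-1)/(1+R^(2β)))^(1/2)`. -/
noncomputable def Walpha (α : ℝ) (R : ℝ) : ℝ :=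
  (3 * betaOf α ^ 2) ^ ((1 : ℝ) / 4) *
    (R ^ (betaOf α - 1) / (1 + R ^ (2 * betaOf α))) ^ ((1 : ℝ) / 2)

/-- `φ₀(R) = β R^((β+1)/2) (1-R^(2β)) / (1+R^(2β))^(3/2)`. -/
noncomputable def phi0 (α : ℝ) (R : ℝ) : ℝ :=
  betaOf α * R ^ ((betaOf α + 1) / 2) * (1 - R ^ (2 * betaOf α)) /
    (1 + R ^ (2 * betaOf α)) ^ ((3 : ℝ) / 2)

/-- `U(R) = 10 W_α(R)⁴ + 20 R W_α(R)³ W_α'(R)`. -/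
noncomputable def Ufun (α : ℝ) (R : ℝ) : ℝ :=
  10 * (Walpha α R) ^ 4 + 20 * R * (Walpha α R) ^ 3 * deriv (Walpha α) R

/-!
With `t = R^β`, one finds `U φ₀² = 30 β⁵ t³ (1 - t²)³ / (R (1 + t²)⁶)`, so the
substitution `t = R^β` turns the integral into `β⁴ ∫₀^∞ g`, where
`g t = 30 t² (1 - t²)³ / (1 + t²)⁶` is the derivative of the rational function
`F t = t³ (10 - 4t² + 10t⁴) / (1 + t²)⁵`. Since `F (1/t) = F t`, the primitive vanishes
both at `0` and at `∞`, so `∫₀^∞ g = 0`.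
-/

open Set Filter Topology

noncomputable def rationalPrimitive (t : ℝ) : ℝ :=
  t ^ 3 * (10 - 4 * t ^ 2 + 10 * t ^ 4) / (1 + t ^ 2) ^ 5

noncomputable def rationalIntegrand (t : ℝ) : ℝ :=
  30 * t ^ 2 * (1 - t ^ 2) ^ 3 / (1 + t ^ 2) ^ 6

lemma hasDerivAt_rationalPrimitive (t : ℝ) :
    HasDerivAt rationalPrimitive (rationalIntegrand t) t := by
  have hden : (1 + t ^ 2) ^ 5 ≠ 0 := by positivity
  have h := ((hasDerivAt_pow 3 t).mul ((((hasDerivAt_pow 2 t).const_mul 4).const_sub 10).add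
    ((hasDerivAt_pow 4 t).const_mul 10))).div (((hasDerivAt_pow 2 t).const_add 1).pow 5) hden
  refine h.congr_deriv ?_
  simp only [rationalIntegrand, Pi.mul_apply, Pi.add_apply, Pi.pow_apply]
  field_simp
  ring

lemma continuous_rationalPrimitive : Continuous rationalPrimitive :=
  continuous_iff_continuousAt.2 fun t => (hasDerivAt_rationalPrimitive t).continuousAt

lemma rationalPrimitive_inv (t : ℝ) : rationalPrimitive t⁻¹ = rationalPrimitive t := by
  rcases eq_or_ne t 0 with rfl | ht
  · simp
  simp only [rationalPrimitive]
  field_simp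
  ring

lemma rationalPrimitive_zero : rationalPrimitive 0 = 0 := by simp [rationalPrimitive]

lemma tendsto_rationalPrimitive_atTop : Tendsto rationalPrimitive atTop (𝓝 0) := by
  have h := (continuous_rationalPrimitive.tendsto 0).comp tendsto_inv_atTop_zero
  rwa [show rationalPrimitive ∘ Inv.inv = rationalPrimitive from funext rationalPrimitive_inv,
    rationalPrimitive_zero] at h

lemma abs_rationalIntegrand_le (t : ℝ) : |rationalIntegrand t| ≤ 30 * (1 + t ^ 2)⁻¹ := by
  have hpos : 0 < 1 + t ^ 2 := by positivity
  have h1 : |1 - t ^ 2| ≤ 1 + t ^ 2 := abs_le.2 ⟨by nlinarith, by nlinarith⟩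
  rw [rationalIntegrand, abs_div, abs_mul, abs_pow, abs_of_pos (pow_pos hpos 6),
    div_le_iff₀ (pow_pos hpos 6)]
  calc |30 * t ^ 2| * |1 - t ^ 2| ^ 3 ≤ 30 * (1 + t ^ 2) * (1 + t ^ 2) ^ 3 := by
        rw [abs_of_nonneg (by positivity)]
        gcongr
        linarith
    _ ≤ 30 * (1 + t ^ 2)⁻¹ * (1 + t ^ 2) ^ 6 := by
        field_simp
        nlinarith [pow_pos hpos 4, pow_pos hpos 5]

lemma integrable_rationalIntegrand : Integrable rationalIntegrand :=
  (integrable_inv_one_add_sq.const_mul 30).mono' (Continuous.aestronglyMeasurable <|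
    (by fun_prop : Continuous _).div (by fun_prop) fun t => by positivity) (ae_of_all _ fun t => by
    simpa using abs_rationalIntegrand_le t)

lemma integral_Ioi_rationalIntegrand : ∫ t in Ioi 0, rationalIntegrand t = 0 := by
  rw [integral_Ioi_of_hasDerivAt_of_tendsto continuous_rationalPrimitive.continuousWithinAt
    (fun t _ => hasDerivAt_rationalPrimitive t) integrable_rationalIntegrand.integrableOn
    tendsto_rationalPrimitive_atTop, rationalPrimitive_zero, sub_zero]

namespace Real

lemma rpow_two_mul {x : ℝ} (hx : 0 ≤ x) (y : ℝ) : x ^ (2 * y) = (x ^ y) ^ 2 := by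
  rw [mul_comm, ← rpow_mul_natCast hx]; norm_num

lemma rpow_div_two_sq {x : ℝ} (hx : 0 ≤ x) (y : ℝ) : (x ^ (y / 2)) ^ 2 = x ^ y := by
  rw [← rpow_mul_natCast hx]; norm_num

end Real

open Real

variable {R : ℝ}

lemma hasDerivAt_rpow_div_one_add_rpow {β : ℝ} (hR : 0 < R) :
    HasDerivAt (fun y => y ^ (β - 1) / (1 + y ^ (2 * β)))
      (R ^ β * ((β - 1) * (1 + (R ^ β) ^ 2) - 2 * β * (R ^ β) ^ 2) /
        (R ^ 2 * (1 + (R ^ β) ^ 2) ^ 2)) R := by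
  have hnum := hasDerivAt_rpow_const (p := β - 1) (Or.inl hR.ne')
  have hden := (hasDerivAt_rpow_const (p := 2 * β) (Or.inl hR.ne')).const_add 1
  refine (hnum.div hden (by positivity)).congr_deriv ?_
  rw [rpow_sub_one hR.ne', rpow_sub_one hR.ne', rpow_sub_one hR.ne', rpow_two_mul hR.le]
  field_simp

lemma Ufun_eq (α : ℝ) (hR : 0 < R) :
    Ufun α R = 30 * betaOf α ^ 3 * (R ^ betaOf α) ^ 2 * (1 - (R ^ betaOf α) ^ 2) /
      (R ^ 2 * (1 + (R ^ betaOf α) ^ 2) ^ 3) := by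
  set β := betaOf α
  have hq_pos : 0 < R ^ (β - 1) / (1 + R ^ (2 * β)) := by positivity
  have hW : HasDerivAt (Walpha α) _ R :=
    ((hasDerivAt_rpow_div_one_add_rpow (β := β) hR).rpow_const (p := 1 / 2)
      (Or.inl hq_pos.ne')).const_mul ((3 * β ^ 2) ^ ((1 : ℝ) / 4))
  rw [Ufun, hW.deriv, rpow_sub_one hq_pos.ne']
  set c : ℝ := (3 * β ^ 2) ^ ((1 : ℝ) / 4) with hc_def
  set q : ℝ := R ^ (β - 1) / (1 + R ^ (2 * β)) with hq_def
  have hc : c ^ 4 = 3 * β ^ 2 := by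
    rw [hc_def, ← rpow_mul_natCast (by positivity)]; norm_num
  have hw : (q ^ ((1 : ℝ) / 2)) ^ 2 = q := by
    rw [← rpow_mul_natCast hq_pos.le]; norm_num
  have hq_eq : q = R ^ β / (R * (1 + (R ^ β) ^ 2)) := by
    rw [hq_def, rpow_sub_one hR.ne', rpow_two_mul hR.le, div_div]
  set w := q ^ ((1 : ℝ) / 2)
  set q' := R ^ β * ((β - 1) * (1 + (R ^ β) ^ 2) - 2 * β * (R ^ β) ^ 2) /
    (R ^ 2 * (1 + (R ^ β) ^ 2) ^ 2) with hq'_def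
  have hWR : Walpha α R = c * w := rfl
  -- `W = c √q`, so `U = 10 W⁴ + 5 R (W⁴)' = 10 c⁴ q² (1 + R q' / q)`
  calc _ = 10 * c ^ 4 * (w ^ 2) ^ 2 * (1 + R * q' / q) := by rw [hWR]; field_simp; ring
    _ = _ := by
      rw [hc, hw, hq'_def, hq_eq]
      field_simp
      ring

lemma phi0_sq_eq (α : ℝ) (hR : 0 < R) :
    phi0 α R ^ 2 = betaOf α ^ 2 * R ^ betaOf α * R * (1 - (R ^ betaOf α) ^ 2) ^ 2 /
      (1 + (R ^ betaOf α) ^ 2) ^ 3 := by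
  have h32 : ((1 + (R ^ betaOf α) ^ 2) ^ ((3 : ℝ) / 2)) ^ 2 = (1 + (R ^ betaOf α) ^ 2) ^ 3 := by
    rw [rpow_div_two_sq (by positivity)]; norm_cast
  rw [phi0, div_pow, mul_pow, mul_pow, rpow_div_two_sq hR.le, rpow_add_one hR.ne',
    rpow_two_mul hR.le, h32, mul_assoc _ (R ^ betaOf α)]

lemma betaOf_nonneg (α : ℝ) : 0 ≤ betaOf α := Real.sqrt_nonneg _

lemma Ufun_mul_phi0_sq_eq (α : ℝ) (hR : 0 < R) :
    Ufun α R * phi0 α R ^ 2 = betaOf α ^ 4 *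
      ((|betaOf α| * R ^ (betaOf α - 1)) • rationalIntegrand (R ^ betaOf α)) := by
  rw [Ufun_eq α hR, phi0_sq_eq α hR, abs_of_nonneg (betaOf_nonneg α), smul_eq_mul,
    rpow_sub_one hR.ne', rationalIntegrand]
  field_simp

/-- `R ↦ U(R) φ₀(R)²` is integrable on `(0,∞)` and its integral vanishes
(the statement `F(0,0) = 0` for the transference operator kernel). -/
theorem U_phi0_sq_integral_zero (α : ℝ) (hα : -(1 / 4 : ℝ) < α) :
    IntegrableOn (fun R => Ufun α R * (phi0 α R) ^ 2) (Set.Ioi 0) ∧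
      ∫ R in Set.Ioi (0 : ℝ), Ufun α R * (phi0 α R) ^ 2 = 0 := by
  have hβ : betaOf α ≠ 0 := (Real.sqrt_pos.2 (by linarith)).ne'
  have hEq : EqOn (fun R => Ufun α R * phi0 α R ^ 2) (fun R => betaOf α ^ 4 *
      ((|betaOf α| * R ^ (betaOf α - 1)) • rationalIntegrand (R ^ betaOf α))) (Ioi 0) :=
    fun _ hR => Ufun_mul_phi0_sq_eq α hR
  refine ⟨?_, ?_⟩
  · refine IntegrableOn.congr_fun ?_ hEq.symm measurableSet_Ioi
    exact ((integrableOn_Ioi_comp_rpow_iff _ hβ).2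
      integrable_rationalIntegrand.integrableOn).const_mul _
  · rw [setIntegral_congr_fun measurableSet_Ioi hEq, integral_const_mul,
      integral_comp_rpow_Ioi _ hβ, integral_Ioi_rationalIntegrand, mul_zero]
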